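/- arXiv:0903.0573 — 3 statements merged into one kernel-verified Lean document; each statement's English description precedes it below -/
import Mathlib

section
/- Let $\lambda>0$ and $\Re\alpha>0$ with $\alpha\neq 1,3,5,\dots$. For even $n$, the integral $\int_{-1}^1 |t|^{\alpha-1}\,\frac{C_n^{\lambda}(t)}{C_n^{\lambda}(1)}\,\tilde c_{\lambda+1/2}(1-t^2)^{\lambda-1/2}\,dt$ multiplied by $\frac{\sqrt{\pi}\,\Gamma((1-\alpha)/2)}{\Gamma(\lambda+1)\Gamma(\alpha/2)}$ equals $(-1)^{n/2}\,\frac{\Gamma((n+1-\alpha)/2)}{\Gamma(\lambda+(n+1+\alpha)/2)}$; for odd $n$ the integral is $0$. -/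
/-!
The integrand has parity `(-1)^n`, so the integral vanishes for odd `n` and for even `n` is twice
the moment `∫₀¹ t^s C_n^λ(t) (1 - t²)^(λ-1/2) dt` at `s = α - 1`. The three-term recurrence of
`C_n^λ` gives a recurrence for these moments in `(n, s)`, which is also satisfied by
`C_n^λ(1) Γ(λ+1/2) Γ((s+1)/2) Γ(s/2+1) / (2 Γ((s-n)/2+1) Γ((s+n)/2+λ+1))`; for `n = 0, 1` both
reduce to a Beta integral through `u = t²`. For `n = 2m`, the identity
`Γ(w) Γ(1-w) / Γ(1-w-m) = (-1)^m Γ(w+m)` at `w = (1-α)/2` turns this into the stated form.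
-/

open MeasureTheory Real

/-- The Gegenbauer polynomial `C_n^λ`, defined by the standard three-term recurrence. -/
noncomputable def gegen (lam : ℝ) : ℕ → ℝ → ℝ
  | 0, _ => 1
  | 1, x => 2 * lam * x
  | (n+2), x => (2*((n:ℝ)+1+lam)*x * gegen lam (n+1) x
      - ((n:ℝ)+2*lam) * gegen lam n x) / ((n:ℝ)+2)

theorem cpow_add_one_of_ne_zero {x : ℂ} (hx : x ≠ 0) (s : ℂ) : x ^ (s + 1) = x ^ s * x := by
  rw [Complex.cpow_add _ _ hx, Complex.cpow_one]

theorem Gamma_mul_Gamma_one_sub_mul_inv_Gamma_sub_nat {w : ℂ} (hw : ∀ k : ℕ, w + k ≠ 0)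
    (h₁ : Complex.Gamma (1 - w) ≠ 0) (m : ℕ) :
    Complex.Gamma w * Complex.Gamma (1 - w) * (Complex.Gamma (1 - w - m))⁻¹
      = (-1) ^ m * Complex.Gamma (w + m) := by
  induction m with
  | zero => simp [mul_inv_cancel_right₀ h₁]
  | succ m ih =>
    push_cast
    rw [Complex.one_div_Gamma_eq_self_mul_one_div_Gamma_add_one,
      show 1 - w - (m + 1) + 1 = 1 - w - m by ring, ← add_assoc, Complex.Gamma_add_one _ (hw m)]
    linear_combination (1 - w - (m + 1)) * ih

theorem integral_neg_self_eq_of_comp_neg {f : ℝ → ℂ} {a : ℝ} (hf : IntervalIntegrable f volume 0 a)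
    {c : ℂ} (hneg : ∀ t, f (-t) = c * f t) :
    ∫ t in -a..a, f t = (c + 1) * ∫ t in 0..a, f t := by
  have hleft : ∫ t in -a..0, f t = c * ∫ t in 0..a, f t := by
    have h := intervalIntegral.integral_comp_neg (a := 0) (b := a) f
    rw [neg_zero] at h
    simp only [← h, hneg, intervalIntegral.integral_const_mul]
  have hint : IntervalIntegrable f volume (-a) 0 := by
    rw [IntervalIntegrable.iff_comp_neg, neg_neg, neg_zero, funext hneg]
    exact (hf.const_mul c).symm
  rw [← intervalIntegral.integral_add_adjacent_intervals hint hf, hleft]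
  ring

theorem integral_cpow_mul_one_sub_sq_rpow (s : ℂ) (μ : ℝ) :
    ∫ t in (0 : ℝ)..1, (t : ℂ) ^ s * (((1 - t ^ 2) ^ μ : ℝ) : ℂ) =
      Complex.betaIntegral ((s + 1) / 2) (μ + 1) / 2 := by
  have hsub := integral_Icc_deriv_smul_of_deriv_nonneg (f := fun t : ℝ => t ^ 2)
    (f' := fun t => 2 * t) (a := 0) (b := 1)
    (g := fun u : ℝ => (u : ℂ) ^ ((s + 1) / 2 - 1) * (1 - (u : ℂ)) ^ ((μ : ℂ) + 1 - 1))
    (by fun_prop) (fun x _ => by simpa using hasDerivAt_pow 2 x)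
    (fun x hx => by linarith [hx.1]) zero_le_one
  simp only [ne_eq, OfNat.ofNat_ne_zero, not_false_eq_true, zero_pow, one_pow] at hsub
  rw [Complex.betaIntegral, intervalIntegral.integral_of_le zero_le_one,
    intervalIntegral.integral_of_le zero_le_one, integral_Ioc_eq_integral_Ioo,
    ← integral_Icc_eq_integral_Ioc, ← hsub, integral_Icc_eq_integral_Ioo,
    eq_div_iff two_ne_zero, ← integral_mul_const]
  refine setIntegral_congr_fun measurableSet_Ioo fun t ht => ?_
  have ht0 : (t : ℂ) ≠ 0 := Complex.ofReal_ne_zero.mpr ht.1.ne'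
  have hsq : ((t ^ 2 : ℝ) : ℂ) ^ ((s + 1) / 2 - 1) = (t : ℂ) ^ (s - 1) := by
    rw [sq, Complex.ofReal_mul, Complex.mul_cpow_ofReal_nonneg ht.1.le ht.1.le,
      ← Complex.cpow_add _ _ ht0]
    ring_nf
  have hweight : (1 - ((t ^ 2 : ℝ) : ℂ)) ^ ((μ : ℂ) + 1 - 1) = (((1 - t ^ 2) ^ μ : ℝ) : ℂ) := by
    rw [Complex.ofReal_cpow (by nlinarith [ht.1, ht.2])]
    push_cast
    ring_nf
  have hpow : (t : ℂ) * (t : ℂ) ^ (s - 1) = (t : ℂ) ^ s := by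
    rw [mul_comm, ← cpow_add_one_of_ne_zero ht0, sub_add_cancel]
  simp only [hsq, hweight, Complex.real_smul, ← hpow]
  push_cast
  ring

theorem intervalIntegrable_cpow_mul_mul_one_sub_sq_rpow {μ : ℝ} (hμ : -1 < μ) {s : ℂ}
    (hs : -1 < s.re) {q : ℝ → ℂ} (hq : ContinuousOn q (Set.Icc 0 1)) :
    IntervalIntegrable (fun t : ℝ => (t : ℂ) ^ s * q t * (((1 - t ^ 2) ^ μ : ℝ) : ℂ))
      volume 0 1 := by
  have hβ := Complex.betaIntegral_convergent (u := s + 1) (v := μ + 1)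
    (by simp only [Complex.add_re, Complex.one_re]; linarith)
    (by simp only [Complex.add_re, Complex.ofReal_re, Complex.one_re]; linarith)
  have hc : ContinuousOn (fun t : ℝ => q t * (((1 + t) ^ μ : ℝ) : ℂ)) (Set.uIcc 0 1) := by
    rw [Set.uIcc_of_le zero_le_one]
    refine hq.mul (Complex.continuous_ofReal.comp_continuousOn ?_)
    exact ContinuousOn.rpow_const (by fun_prop) fun t ht => Or.inl (by linarith [ht.1])
  refine (hβ.mul_continuousOn hc).congr_uIoo fun t ht => ?_
  rw [Set.uIoo_of_le zero_le_one] at ht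
  obtain ⟨ht0, ht1⟩ := ht
  have hsplit :
      (((1 - t ^ 2) ^ μ : ℝ) : ℂ) = (1 - (t : ℂ)) ^ (μ : ℂ) * (((1 + t) ^ μ : ℝ) : ℂ) := by
    rw [show (1 : ℝ) - t ^ 2 = (1 - t) * (1 + t) by ring,
      Real.mul_rpow (by linarith) (by linarith),
      Complex.ofReal_mul, Complex.ofReal_cpow (by linarith)]
    push_cast
    rfl
  simp only [add_sub_cancel_right, hsplit]
  ring

theorem gegen_add_two (lam : ℝ) (n : ℕ) (x : ℝ) :
    gegen lam (n + 2) x = (2 * ((n : ℝ) + 1 + lam) * x * gegen lam (n + 1) x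
      - ((n : ℝ) + 2 * lam) * gegen lam n x) / ((n : ℝ) + 2) := rfl

theorem gegen_continuous (lam : ℝ) (n : ℕ) : Continuous (gegen lam n) := by
  induction n using Nat.twoStepInduction with
  | zero => exact continuous_const
  | one => exact continuous_const.mul continuous_id
  | more n h₀ h₁ => simp only [funext (gegen_add_two lam n)]; fun_prop

theorem gegen_neg (lam : ℝ) (n : ℕ) (x : ℝ) : gegen lam n (-x) = (-1) ^ n * gegen lam n x := by
  induction n using Nat.twoStepInduction with
  | zero => simp [gegen]
  | one => simp [gegen]
  | more n h₀ h₁ => rw [gegen_add_two, gegen_add_two, h₀, h₁]; ring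

theorem gegen_succ_one (lam : ℝ) (n : ℕ) :
    ((n : ℝ) + 1) * gegen lam (n + 1) 1 = ((n : ℝ) + 2 * lam) * gegen lam n 1 := by
  induction n with
  | zero => simp [gegen]
  | succ k ih =>
    have hk : (k : ℝ) + 2 ≠ 0 := by positivity
    rw [gegen_add_two]
    push_cast
    rw [show (k : ℝ) + 1 + 1 = k + 2 by ring, mul_div_cancel₀ _ hk]
    linear_combination ih

theorem gegen_one_pos {lam : ℝ} (hlam : 0 < lam) (n : ℕ) : 0 < gegen lam n 1 := by
  induction n with
  | zero => simp [gegen]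
  | succ k ih =>
    have h : 0 < ((k : ℝ) + 1) * gegen lam (k + 1) 1 := by
      rw [gegen_succ_one]; positivity
    exact pos_of_mul_pos_right h (by positivity)

noncomputable def gegenMoment (lam : ℝ) (n : ℕ) (s : ℂ) : ℂ :=
  ∫ t in (0 : ℝ)..1, (t : ℂ) ^ s * gegen lam n t * (((1 - t ^ 2) ^ (lam - 1 / 2) : ℝ) : ℂ)

theorem intervalIntegrable_gegenMoment {lam : ℝ} (hlam : -1 / 2 < lam) {s : ℂ}
    (hs : -1 < s.re) (n : ℕ) :
    IntervalIntegrable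
      (fun t : ℝ => (t : ℂ) ^ s * gegen lam n t * (((1 - t ^ 2) ^ (lam - 1 / 2) : ℝ) : ℂ))
      volume 0 1 :=
  intervalIntegrable_cpow_mul_mul_one_sub_sq_rpow (by linarith) hs
    (Complex.continuous_ofReal.comp (gegen_continuous lam n)).continuousOn

theorem gegenMoment_one (lam : ℝ) (s : ℂ) :
    gegenMoment lam 1 s = 2 * lam * gegenMoment lam 0 (s + 1) := by
  rw [gegenMoment, gegenMoment, ← intervalIntegral.integral_const_mul]
  refine intervalIntegral.integral_congr_Ioo_of_le zero_le_one fun t ht => ?_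
  simp only [gegen, cpow_add_one_of_ne_zero (Complex.ofReal_ne_zero.mpr ht.1.ne')]
  push_cast
  ring

theorem gegenMoment_add_two {lam : ℝ} (hlam : -1 / 2 < lam) {s : ℂ} (hs : -1 < s.re) (n : ℕ) :
    gegenMoment lam (n + 2) s =
      2 * (n + 1 + lam) / (n + 2) * gegenMoment lam (n + 1) (s + 1)
        - (n + 2 * lam) / (n + 2) * gegenMoment lam n s := by
  have hs' : -1 < (s + 1).re := by simp only [Complex.add_re, Complex.one_re]; linarith
  rw [gegenMoment, gegenMoment, gegenMoment, ← intervalIntegral.integral_const_mul,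
    ← intervalIntegral.integral_const_mul, ← intervalIntegral.integral_sub
      ((intervalIntegrable_gegenMoment hlam hs' _).const_mul _)
      ((intervalIntegrable_gegenMoment hlam hs _).const_mul _)]
  refine intervalIntegral.integral_congr_Ioo_of_le zero_le_one fun t ht => ?_
  have hn : (n : ℂ) + 2 ≠ 0 := by exact_mod_cast (n + 1).succ_ne_zero
  simp only [gegen_add_two, cpow_add_one_of_ne_zero (Complex.ofReal_ne_zero.mpr ht.1.ne')]
  push_cast
  field_simp

/-- `(Γ z)⁻¹` is the entire function `1 / Γ`, since Mathlib's `Γ` vanishes at its poles. -/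
noncomputable def gegenMomentFormula (lam : ℝ) (n : ℕ) (s : ℂ) : ℂ :=
  gegen lam n 1 * Complex.Gamma (lam + 1 / 2) / 2 * Complex.Gamma ((s + 1) / 2)
    * Complex.Gamma (s / 2 + 1) * (Complex.Gamma ((s - n) / 2 + 1))⁻¹
    * (Complex.Gamma ((s + n) / 2 + lam + 1))⁻¹

theorem gegenMoment_zero {lam : ℝ} (hlam : -1 / 2 < lam) {s : ℂ} (hs : -1 < s.re) :
    gegenMoment lam 0 s = gegenMomentFormula lam 0 s := by
  have hu : 0 < ((s + 1) / 2).re := by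
    rw [Complex.div_ofNat_re, Complex.add_re, Complex.one_re]; linarith
  have hv : 0 < ((lam : ℂ) + 1 / 2).re := by
    simp only [Complex.add_re, Complex.ofReal_re, Complex.div_ofNat_re, Complex.one_re]; linarith
  have hQ : Complex.Gamma (s / 2 + 1) ≠ 0 := Complex.Gamma_ne_zero_of_re_pos (by
    rw [Complex.add_re, Complex.div_ofNat_re, Complex.one_re]; linarith)
  have hβ := Complex.Gamma_mul_Gamma_eq_betaIntegral hu hv
  simp only [gegenMoment, gegenMomentFormula, gegen, Complex.ofReal_one, mul_one, one_mul,
    CharP.cast_eq_zero, sub_zero, add_zero]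
  rw [integral_cpow_mul_one_sub_sq_rpow, show ((lam - 1 / 2 : ℝ) : ℂ) + 1 = lam + 1 / 2 by
    push_cast; ring]
  have hR : Complex.Gamma (s / 2 + lam + 1) ≠ 0 := Complex.Gamma_ne_zero_of_re_pos (by
    simp only [Complex.add_re, Complex.div_ofNat_re, Complex.ofReal_re, Complex.one_re]; linarith)
  rw [show (s + 1) / 2 + (lam + 1 / 2) = s / 2 + lam + 1 by ring] at hβ
  have hβ' : Complex.betaIntegral ((s + 1) / 2) (lam + 1 / 2) =
      Complex.Gamma ((s + 1) / 2) * Complex.Gamma (lam + 1 / 2) / Complex.Gamma (s / 2 + lam + 1) :=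
    eq_div_of_mul_eq hR (by rw [hβ, mul_comm])
  rw [mul_inv_cancel_right₀ hQ, hβ']
  ring

theorem gegenMomentFormula_one (lam : ℝ) {s : ℂ} (hs : -1 < s.re) :
    gegenMomentFormula lam 1 s = 2 * lam * gegenMomentFormula lam 0 (s + 1) := by
  have hP : Complex.Gamma ((s + 1) / 2) ≠ 0 := Complex.Gamma_ne_zero_of_re_pos (by
    rw [Complex.div_ofNat_re, Complex.add_re, Complex.one_re]; linarith)
  have hP' : Complex.Gamma ((s + 1) / 2 + 1) ≠ 0 := Complex.Gamma_ne_zero_of_re_pos (by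
    rw [Complex.add_re, Complex.div_ofNat_re, Complex.add_re, Complex.one_re]; linarith)
  simp only [gegenMomentFormula, gegen, Nat.cast_one, CharP.cast_eq_zero, sub_zero, add_zero]
  rw [show (s - 1) / 2 + 1 = (s + 1) / 2 by ring, show (s + 1 + 1) / 2 = s / 2 + 1 by ring]
  push_cast
  rw [mul_inv_cancel_right₀ hP']
  field_simp

theorem gegenMomentFormula_add_two (lam : ℝ) {s : ℂ} (hs : s + 1 ≠ 0) (n : ℕ) :
    gegenMomentFormula lam (n + 2) s =
      2 * (n + 1 + lam) / (n + 2) * gegenMomentFormula lam (n + 1) (s + 1)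
        - (n + 2 * lam) / (n + 2) * gegenMomentFormula lam n s := by
  have hsucc : ((n : ℂ) + 1) * gegen lam (n + 1) 1 = (n + 2 * lam) * gegen lam n 1 := by
    exact_mod_cast congrArg ((↑) : ℝ → ℂ) (gegen_succ_one lam n)
  have hP : Complex.Gamma ((s + 1) / 2 + 1) = (s + 1) / 2 * Complex.Gamma ((s + 1) / 2) :=
    Complex.Gamma_add_one _ (div_ne_zero hs two_ne_zero)
  have hA := Complex.one_div_Gamma_eq_self_mul_one_div_Gamma_add_one ((s - n) / 2)
  have hB := Complex.one_div_Gamma_eq_self_mul_one_div_Gamma_add_one ((s + n) / 2 + lam + 1)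
  simp only [gegenMomentFormula, gegen_add_two]
  push_cast
  rw [show (s - (n + 2)) / 2 + 1 = (s - n) / 2 by ring, show (s + 1 + 1) / 2 = s / 2 + 1 by ring,
    hP,
    show (s + 1 - (n + 1)) / 2 + 1 = (s - n) / 2 + 1 by ring,
    show (s + (n + 2)) / 2 + lam + 1 = (s + n) / 2 + lam + 1 + 1 by ring,
    show (s + 1 + (n + 1)) / 2 + lam + 1 = (s + n) / 2 + lam + 1 + 1 by ring, hA, hB]
  linear_combination (-(n + 1 + lam) * Complex.Gamma (lam + 1 / 2) / 2
    * Complex.Gamma ((s + 1) / 2) * Complex.Gamma (s / 2 + 1)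
    * (Complex.Gamma ((s - n) / 2 + 1))⁻¹ * (Complex.Gamma ((s + n) / 2 + lam + 1 + 1))⁻¹
    / (n + 2)) * hsucc

theorem gegenMoment_eq_formula {lam : ℝ} (hlam : -1 / 2 < lam) (n : ℕ) :
    ∀ s : ℂ, -1 < s.re → gegenMoment lam n s = gegenMomentFormula lam n s := by
  induction n using Nat.twoStepInduction with
  | zero => exact fun s hs => gegenMoment_zero hlam hs
  | one =>
    intro s hs
    have hs' : -1 < (s + 1).re := by simp only [Complex.add_re, Complex.one_re]; linarith
    rw [gegenMoment_one, gegenMoment_zero hlam hs', gegenMomentFormula_one lam hs]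
  | more n ih₀ ih₁ =>
    intro s hs
    have hs' : -1 < (s + 1).re := by simp only [Complex.add_re, Complex.one_re]; linarith
    have hs1 : s + 1 ≠ 0 := ne_of_apply_ne Complex.re (by
      simp only [Complex.add_re, Complex.one_re, Complex.zero_re]; linarith)
    rw [gegenMoment_add_two hlam hs, gegenMomentFormula_add_two lam hs1, ih₀ s hs, ih₁ _ hs']

theorem integral_abs_cpow_mul_gegen_mul_weight {lam : ℝ} (hlam : -1 / 2 < lam) {s : ℂ}
    (hs : -1 < s.re) (n : ℕ) :
    ∫ t in (-1 : ℝ)..1,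
        ((|t| : ℝ) : ℂ) ^ s * gegen lam n t * (((1 - t ^ 2) ^ (lam - 1 / 2) : ℝ) : ℂ)
      = ((-1) ^ n + 1) * gegenMoment lam n s := by
  have hpos : Set.EqOn
      (fun t : ℝ => ((|t| : ℝ) : ℂ) ^ s * gegen lam n t * (((1 - t ^ 2) ^ (lam - 1 / 2) : ℝ) : ℂ))
      (fun t : ℝ => (t : ℂ) ^ s * gegen lam n t * (((1 - t ^ 2) ^ (lam - 1 / 2) : ℝ) : ℂ))
      (Set.uIcc 0 1) := fun t ht => by
    rw [Set.uIcc_of_le zero_le_one] at ht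
    simp only [abs_of_nonneg ht.1]
  have hint := (intervalIntegrable_gegenMoment hlam hs n).congr
    (hpos.symm.mono Set.uIoc_subset_uIcc)
  rw [integral_neg_self_eq_of_comp_neg hint (c := (-1) ^ n), intervalIntegral.integral_congr hpos,
    gegenMoment]
  intro t
  simp only [abs_neg, neg_sq, gegen_neg]
  push_cast
  ring

theorem integral_abs_cpow_mul_normalized_gegen {lam : ℝ} (hlam : 0 < lam) {s : ℂ}
    (hs : -1 < s.re) (n : ℕ) :
    ∫ t in (-1:ℝ)..1, ((|t| : ℝ) : ℂ) ^ s * ((gegen lam n t / gegen lam n 1 : ℝ) : ℂ) *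
        (((Real.sqrt π)⁻¹ * Real.Gamma (lam + 1) / Real.Gamma (lam + 1/2) *
          (1 - t^2) ^ (lam - 1/2) : ℝ) : ℂ)
      = ((-1) ^ n + 1) * (Real.Gamma (lam + 1) / (2 * Real.sqrt π)) * Complex.Gamma ((s + 1) / 2)
        * Complex.Gamma (s / 2 + 1) * (Complex.Gamma ((s - n) / 2 + 1))⁻¹
        * (Complex.Gamma ((s + n) / 2 + lam + 1))⁻¹ := by
  have hg : (gegen lam n 1 : ℂ) ≠ 0 := Complex.ofReal_ne_zero.mpr (gegen_one_pos hlam n).ne'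
  have hπ : (Real.sqrt π : ℂ) ≠ 0 := Complex.ofReal_ne_zero.mpr (by positivity)
  have hΓ : (Real.Gamma (lam + 1 / 2) : ℂ) ≠ 0 :=
    Complex.ofReal_ne_zero.mpr (Real.Gamma_pos_of_pos (by linarith)).ne'
  have hΓc : Complex.Gamma (lam + 1 / 2) = Real.Gamma (lam + 1 / 2) := by
    rw [← Complex.Gamma_ofReal]; push_cast; rfl
  have hconst : ∀ t : ℝ, ((|t| : ℝ) : ℂ) ^ s * ((gegen lam n t / gegen lam n 1 : ℝ) : ℂ) *
      (((Real.sqrt π)⁻¹ * Real.Gamma (lam + 1) / Real.Gamma (lam + 1/2) *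
        (1 - t^2) ^ (lam - 1/2) : ℝ) : ℂ)
      = ((Real.sqrt π)⁻¹ * Real.Gamma (lam + 1) / Real.Gamma (lam + 1/2) / gegen lam n 1 : ℝ) *
        (((|t| : ℝ) : ℂ) ^ s * gegen lam n t * (((1 - t ^ 2) ^ (lam - 1 / 2) : ℝ) : ℂ)) := by
    intro t; push_cast; ring
  simp only [hconst]
  rw [intervalIntegral.integral_const_mul, integral_abs_cpow_mul_gegen_mul_weight (by linarith) hs,
    gegenMoment_eq_formula (by linarith) n _ hs, gegenMomentFormula, hΓc]
  push_cast
  -- otherwise `field_simp` normalizes `lam + 1 / 2` inside `Γ` and no longer sees `hΓ`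
  generalize (Real.Gamma (lam + 1 / 2) : ℂ) = G at hΓ ⊢
  field_simp

theorem stmt_1 (lam : ℝ) (hlam : 0 < lam) (α : ℂ) (hre : 0 < α.re)
    (hodd : ∀ k : ℕ, α ≠ 2 * k + 1) (n : ℕ) :
    (Even n →
      (Real.sqrt π * Complex.Gamma ((1 - α)/2) /
          ((Real.Gamma (lam + 1) : ℂ) * Complex.Gamma (α/2))) *
        ∫ t in (-1:ℝ)..1, ((|t| : ℝ) : ℂ) ^ (α - 1) *
          ((gegen lam n t / gegen lam n 1 : ℝ) : ℂ) *
          (((Real.sqrt π)⁻¹ * Real.Gamma (lam + 1) / Real.Gamma (lam + 1/2) *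
              (1 - t^2) ^ (lam - 1/2) : ℝ) : ℂ) =
      (-1 : ℂ) ^ (n / 2) *
        (Complex.Gamma (((n : ℂ) + 1 - α)/2) / Complex.Gamma ((lam : ℂ) + ((n : ℂ) + 1 + α)/2))) ∧
    (Odd n →
      (∫ t in (-1:ℝ)..1, ((|t| : ℝ) : ℂ) ^ (α - 1) *
          ((gegen lam n t / gegen lam n 1 : ℝ) : ℂ) *
          (((Real.sqrt π)⁻¹ * Real.Gamma (lam + 1) / Real.Gamma (lam + 1/2) *
              (1 - t^2) ^ (lam - 1/2) : ℝ) : ℂ)) = 0) := by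
  have hs : -1 < (α - 1).re := by simp only [Complex.sub_re, Complex.one_re]; linarith
  rw [integral_abs_cpow_mul_normalized_gegen hlam hs]
  refine ⟨fun ⟨m, hm⟩ => ?_, fun hn => by rw [hn.neg_one_pow]; ring⟩
  subst hm
  have hw : ∀ k : ℕ, (1 - α) / 2 + k ≠ 0 := fun k h => hodd k (by linear_combination -2 * h)
  have h₁ : Complex.Gamma (1 - (1 - α) / 2) ≠ 0 := Complex.Gamma_ne_zero_of_re_pos (by
    simp only [Complex.sub_re, Complex.one_re, Complex.div_ofNat_re]; linarith)
  have hα : Complex.Gamma (α / 2) ≠ 0 := Complex.Gamma_ne_zero_of_re_pos (by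
    rw [Complex.div_ofNat_re]; linarith)
  have hπ : (Real.sqrt π : ℂ) ≠ 0 := Complex.ofReal_ne_zero.mpr (by positivity)
  have hΓ : (Real.Gamma (lam + 1) : ℂ) ≠ 0 :=
    Complex.ofReal_ne_zero.mpr (Real.Gamma_pos_of_pos (by linarith)).ne'
  rw [Even.neg_one_pow ⟨m, rfl⟩, show (m + m) / 2 = m by omega]
  push_cast
  rw [show ((m : ℂ) + m + 1 - α) / 2 = (1 - α) / 2 + m by ring, div_eq_mul_inv (Complex.Gamma _),
    ← mul_assoc ((-1 : ℂ) ^ m),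
    ← Gamma_mul_Gamma_one_sub_mul_inv_Gamma_sub_nat hw h₁ m,
    show (α - 1 + 1) / 2 = α / 2 by ring, show (α - 1) / 2 + 1 = 1 - (1 - α) / 2 by ring,
    show (α - 1 - (m + m)) / 2 + 1 = 1 - (1 - α) / 2 - m by ring,
    show (α - 1 + (m + m)) / 2 + lam + 1 = lam + (m + m + 1 + α) / 2 by ring]
  field_simp
  ring
end

section
/- Let $\lambda>0$, $\alpha\neq 1,3,5,\dots$, $r$ a nonnegative integer, and $n$ an even nonnegative integer. Define $b_{n,\beta}=(-1)^{n/2}\Gamma((n+1-\beta)/2)/\Gamma(\lambda+(n+1+\beta)/2)$ and $\mu_n=n(n+2\lambda)$. Then $$\Big(4^{-r}\prod_{j=1}^{r}\big[\mu_n+(2\lambda-2r+2j+\alpha-1)(2r-2j+1-\alpha)\big]\Big)\cdot b_{n,2r-2\lambda-\alpha}\cdot b_{n,\alpha}=1,$$ provided $2r-2\lambda-\alpha\neq 1,3,5,\dots$ (for $r=0$ the empty product is $1$). -/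
/-!
Put `A = (n + 1 - α) / 2` and `C = λ + (n + 1 + α) / 2 - r`. The `j`-th factor of the product is
`4 (A + r - j) (C + j - 1)`, so the product is `4 ^ r (A)_r (C)_r` in Pochhammer notation, while
`b_{n, 2r - 2λ - α} = ± Γ(C) / Γ(A + r)` and `b_{n, α} = ± Γ(A) / Γ(C + r)` with the same sign.
Since `Γ(z + r) = (z)_r Γ(z)`, everything cancels. The parity conditions on `α` and `2r - 2λ - α`,
together with `n` even, say exactly that `A` and `C` are not poles of `Γ`.
-/

open Finset

theorem ascPochhammer_eval_eq_prod_range {R : Type*} [CommSemiring R] (n : ℕ) (x : R) :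
    (ascPochhammer R n).eval x = ∏ i ∈ range n, (x + i) := by
  induction n with
  | zero => simp
  | succ n ih => simp [ascPochhammer_succ_right, ih, prod_range_succ]

theorem prod_Icc_eq_ascPochhammer_mul {R : Type*} [CommRing R] (a c : R) (r : ℕ) :
    ∏ j ∈ Icc 1 r, (a + r - j) * (c + j - 1) =
      (ascPochhammer R r).eval a * (ascPochhammer R r).eval c := by
  rw [ascPochhammer_eval_eq_prod_range, ascPochhammer_eval_eq_prod_range,
    ← prod_range_reflect (fun i => a + i) r, ← prod_mul_distrib,
    ← Ico_add_one_right_eq_Icc, prod_Ico_eq_prod_range]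
  refine prod_congr (by simp) fun i hi => ?_
  have hi : 1 + i ≤ r := by have := mem_range.1 hi; omega
  push_cast [Nat.sub_sub, Nat.cast_sub hi]
  ring

theorem prod_Icc_eq_four_pow_mul_ascPochhammer {K : Type*} [Field K] [CharZero K]
    (ν l α : K) (r : ℕ) :
    ∏ j ∈ Icc 1 r, (ν * (ν + 2 * l) + (2 * l - 2 * r + 2 * j + α - 1) * (2 * r - 2 * j + 1 - α)) =
      4 ^ r * ((ascPochhammer K r).eval ((ν + 1 - α) / 2) *
        (ascPochhammer K r).eval (l + (ν + 1 + α) / 2 - r)) := by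
  calc _ = ∏ j ∈ Icc 1 r, 4 * (((ν + 1 - α) / 2 + r - j) * (l + (ν + 1 + α) / 2 - r + j - 1)) :=
        prod_congr rfl fun j _ => by ring
    _ = _ := by
        rw [prod_mul_distrib, prod_const, Nat.card_Icc, add_tsub_cancel_right,
          prod_Icc_eq_ascPochhammer_mul]

theorem Complex.Gamma_add_nat_eq_ascPochhammer_mul {z : ℂ} (hz : ∀ k : ℕ, z ≠ -k) (n : ℕ) :
    Complex.Gamma (z + n) = (ascPochhammer ℂ n).eval z * Complex.Gamma z := by
  rw [← Complex.Gamma_add_nat_div_Gamma_eq z hz, div_mul_cancel₀ _ (Complex.Gamma_ne_zero hz)]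

theorem ascPochhammer_eval_ne_zero {R : Type*} [CommRing R] [IsDomain R] {x : R}
    (hx : ∀ k : ℕ, x ≠ -k) (n : ℕ) : (ascPochhammer R n).eval x ≠ 0 := by
  rw [Ne, ascPochhammer_eval_eq_zero_iff]
  rintro ⟨k, -, hk⟩
  exact hx k (by rw [hk, neg_neg])

theorem Complex.Gamma_div_Gamma_add_nat_mul_Gamma_div_Gamma_add_nat {z w : ℂ}
    (hz : ∀ k : ℕ, z ≠ -k) (hw : ∀ k : ℕ, w ≠ -k) (n : ℕ) :
    Complex.Gamma w / Complex.Gamma (z + n) * (Complex.Gamma z / Complex.Gamma (w + n)) =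
      ((ascPochhammer ℂ n).eval z * (ascPochhammer ℂ n).eval w)⁻¹ := by
  rw [Complex.Gamma_add_nat_eq_ascPochhammer_mul hz, Complex.Gamma_add_nat_eq_ascPochhammer_mul hw]
  have := Complex.Gamma_ne_zero hz
  have := Complex.Gamma_ne_zero hw
  field_simp

theorem stmt_2_general (lam : ℝ) (α : ℂ)
    (hodd : ∀ k : ℕ, α ≠ 2 * k + 1) (r : ℕ) (n : ℕ) (hn : Even n)
    (hodd' : ∀ k : ℕ, 2 * (r : ℂ) - 2 * lam - α ≠ 2 * k + 1)
    (b : ℂ → ℂ)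
    (hb : ∀ β : ℂ, b β = (-1 : ℂ) ^ (n / 2) *
      Complex.Gamma (((n : ℂ) + 1 - β)/2) / Complex.Gamma ((lam : ℂ) + ((n : ℂ) + 1 + β)/2)) :
    ((4 : ℂ) ^ (-(r : ℤ)) *
      ∏ j ∈ Finset.Icc 1 r,
        (((n : ℂ) * ((n : ℂ) + 2 * lam)) +
          (2 * (lam : ℂ) - 2 * r + 2 * j + α - 1) * (2 * (r : ℂ) - 2 * j + 1 - α))) *
      b (2 * (r : ℂ) - 2 * lam - α) * b α = 1 := by
  obtain ⟨t, ht⟩ := hn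
  have hnt : (n : ℂ) = 2 * t := by rw [ht, Nat.cast_add]; ring
  set A : ℂ := ((n : ℂ) + 1 - α) / 2
  set C : ℂ := lam + ((n : ℂ) + 1 + α) / 2 - r
  have hA : ∀ k : ℕ, A ≠ -k := fun k h =>
    hodd (t + k) (by push_cast; linear_combination -2 * h + hnt)
  have hC : ∀ k : ℕ, C ≠ -k := fun k h =>
    hodd' (t + k) (by push_cast; linear_combination -2 * h + hnt)
  set s : ℂ := (-1) ^ (n / 2)
  have hs : s * s = 1 := by rw [← mul_pow]; norm_num
  have hb₁ : b (2 * r - 2 * lam - α) = s * Complex.Gamma C / Complex.Gamma (A + r) := by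
    simp only [hb, s, A, C]; ring_nf
  have hb₂ : b α = s * Complex.Gamma A / Complex.Gamma (C + r) := by
    simp only [hb, s, A, C]; ring_nf
  have h4 : (4 : ℂ) ^ (-(r : ℤ)) * 4 ^ r = 1 := by
    rw [zpow_neg, zpow_natCast, inv_mul_cancel₀ (pow_ne_zero _ (by norm_num))]
  set P := (ascPochhammer ℂ r).eval A * (ascPochhammer ℂ r).eval C
  have hP : P ≠ 0 :=
    mul_ne_zero (ascPochhammer_eval_ne_zero hA r) (ascPochhammer_eval_ne_zero hC r)
  rw [prod_Icc_eq_four_pow_mul_ascPochhammer, hb₁, hb₂]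
  calc _ = ((4 : ℂ) ^ (-(r : ℤ)) * 4 ^ r) * (s * s) * (P * (Complex.Gamma C /
        Complex.Gamma (A + r) * (Complex.Gamma A / Complex.Gamma (C + r)))) := by ring
    _ = 1 := by
      rw [h4, hs, Complex.Gamma_div_Gamma_add_nat_mul_Gamma_div_Gamma_add_nat hA hC,
        mul_inv_cancel₀ hP, one_mul, one_mul]

theorem stmt_2 (lam : ℝ) (hlam : 0 < lam) (α : ℂ)
    (hodd : ∀ k : ℕ, α ≠ 2 * k + 1) (r : ℕ) (n : ℕ) (hn : Even n)
    (hodd' : ∀ k : ℕ, 2 * (r : ℂ) - 2 * lam - α ≠ 2 * k + 1)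
    (b : ℂ → ℂ)
    (hb : ∀ β : ℂ, b β = (-1 : ℂ) ^ (n / 2) *
      Complex.Gamma (((n : ℂ) + 1 - β)/2) / Complex.Gamma ((lam : ℂ) + ((n : ℂ) + 1 + β)/2)) :
    ((4 : ℂ) ^ (-(r : ℤ)) *
      ∏ j ∈ Finset.Icc 1 r,
        (((n : ℂ) * ((n : ℂ) + 2 * lam)) +
          (2 * (lam : ℂ) - 2 * r + 2 * j + α - 1) * (2 * (r : ℂ) - 2 * j + 1 - α))) *
      b (2 * (r : ℂ) - 2 * lam - α) * b α = 1 :=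
  stmt_2_general lam α hodd r n hn hodd' b hb
end

section
/- Let $d\ge 1$, $\kappa_1>0$, and consider on $\mathbb{S}^d\subset\mathbb{R}^{d+1}$ the weight $h_\kappa(x)=|x_1|^{\kappa_1}$ and the operator $V_\kappa f(x)=\tilde c_{\kappa_1}\int_{-1}^1 f(x_1 t,\tilde x)(1+t)(1-t^2)^{\kappa_1-1}dt$ where $x=(x_1,\tilde x)$. Then for $\phi$ integrable on $[-1,1]$ against $(1-t^2)^{\kappa_1-1}dt$ and points $x,y$ with $x_1y_1\neq 0$, $$V_\kappa[\phi(\langle x,\cdot\rangle)](y)=\frac{\tilde c_{\kappa_1}}{|x_1y_1|^{2\kappa_1}}\int_{\langle\tilde x,\tilde y\rangle-|x_1y_1|}^{\langle\tilde x,\tilde y\rangle+|x_1y_1|}\phi(\tau)\,|\langle x,y\rangle-\tau|^{\kappa_1-1}\,|\langle x\sigma,y\rangle-\tau|^{\kappa_1}\,d\tau,$$ where $x\sigma=(-x_1,\tilde x)$. -/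
/- The substitution `τ = a t + b` with `a = x₁ y₁`, `b = ⟨x̃, ỹ⟩` maps `[-1, 1]` onto
`[b - |a|, b + |a|]`, and on the open interval the kernel `(1 + t)(1 - t²)^(κ-1)` becomes
`|a|^(1-2κ) |a + b - τ|^(κ-1) |-a + b - τ|^κ`, because `a + b - τ = a (1 - t)` and
`-a + b - τ = -a (1 + t)`. -/

open MeasureTheory Real

theorem intervalIntegral.integral_comp_mul_add_neg_one_one (f : ℝ → ℝ) {a : ℝ} (ha : a ≠ 0)
    (b : ℝ) :
    ∫ t in (-1 : ℝ)..1, f (a * t + b) = |a|⁻¹ * ∫ τ in b - |a|..b + |a|, f τ := by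
  rw [intervalIntegral.integral_comp_mul_add f ha b, smul_eq_mul]
  rcases abs_cases a with ⟨habs, -⟩ | ⟨habs, -⟩
  · rw [habs, show a * (-1) + b = b - a by ring, show a * 1 + b = b + a by ring]
  · rw [habs, show a * (-1) + b = b + -a by ring, show a * 1 + b = b - -a by ring,
      intervalIntegral.integral_symm, inv_neg, neg_mul, mul_neg]

theorem abs_rpow_mul_abs_rpow_of_mem_Ioo {a t : ℝ} (ha : a ≠ 0) (ht : t ∈ Set.Ioo (-1 : ℝ) 1)
    (b κ : ℝ) :
    |a + b - (a * t + b)| ^ (κ - 1) * |-a + b - (a * t + b)| ^ κ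
      = |a| ^ (2 * κ - 1) * ((1 + t) * (1 - t ^ 2) ^ (κ - 1)) := by
  obtain ⟨h1t, ht1⟩ := ht
  have hm : 0 < 1 - t := by linarith
  have hp : 0 < 1 + t := by linarith
  have ha' : 0 < |a| := abs_pos.mpr ha
  rw [show a + b - (a * t + b) = a * (1 - t) by ring,
    show -a + b - (a * t + b) = -(a * (1 + t)) by ring, abs_neg, abs_mul, abs_mul,
    abs_of_pos hm, abs_of_pos hp, show 1 - t ^ 2 = (1 - t) * (1 + t) by ring,
    mul_rpow ha'.le hm.le, mul_rpow ha'.le hp.le, mul_rpow hm.le hp.le,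
    show 2 * κ - 1 = κ - 1 + κ by ring, rpow_add ha',
    show κ = κ - 1 + 1 by ring, rpow_add hp, rpow_one]
  ring_nf

theorem integral_comp_mul_add_mul_one_add_mul_one_sub_sq_rpow (φ : ℝ → ℝ) {a : ℝ} (ha : a ≠ 0)
    (b κ : ℝ) :
    ∫ t in (-1 : ℝ)..1, φ (a * t + b) * (1 + t) * (1 - t ^ 2) ^ (κ - 1)
      = (|a| ^ (2 * κ))⁻¹ * ∫ τ in b - |a|..b + |a|,
          φ τ * |a + b - τ| ^ (κ - 1) * |-a + b - τ| ^ κ := by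
  have ha' : 0 < |a| := abs_pos.mpr ha
  have hkernel : Set.EqOn
      (fun t => φ (a * t + b) * (1 + t) * (1 - t ^ 2) ^ (κ - 1))
      (fun t => |a| ^ (1 - 2 * κ) *
        (φ (a * t + b) * |a + b - (a * t + b)| ^ (κ - 1) * |-a + b - (a * t + b)| ^ κ))
      (Set.Ioo (-1) 1) := by
    intro t ht
    have hcancel : |a| ^ (1 - 2 * κ) * |a| ^ (2 * κ - 1) = 1 := by
      rw [← rpow_add ha', show 1 - 2 * κ + (2 * κ - 1) = 0 by ring, rpow_zero]
    simp only [mul_assoc, abs_rpow_mul_abs_rpow_of_mem_Ioo ha ht]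
    linear_combination (-(φ (a * t + b) * ((1 + t) * (1 - t ^ 2) ^ (κ - 1)))) * hcancel
  rw [intervalIntegral.integral_congr_Ioo_of_le (by norm_num) hkernel,
    intervalIntegral.integral_const_mul,
    intervalIntegral.integral_comp_mul_add_neg_one_one
      (fun τ => φ τ * |a + b - τ| ^ (κ - 1) * |-a + b - τ| ^ κ) ha b,
    ← mul_assoc, ← rpow_neg_one, ← rpow_add ha', ← rpow_neg ha'.le]
  ring_nf

theorem stmt_8_general (d : ℕ) (κ : ℝ)
    (x₁ y₁ : ℝ) (xt yt : EuclideanSpace ℝ (Fin d))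
    (hxy : x₁ * y₁ ≠ 0)
    (φ : ℝ → ℝ) :
    ((Real.sqrt π)⁻¹ * Real.Gamma (κ + 1/2) / Real.Gamma κ) *
        ∫ t in (-1:ℝ)..1, φ (x₁ * y₁ * t + inner ℝ xt yt) * (1 + t) * (1 - t^2) ^ (κ - 1) =
      ((Real.sqrt π)⁻¹ * Real.Gamma (κ + 1/2) / Real.Gamma κ) / |x₁ * y₁| ^ (2 * κ) *
        ∫ τ in (inner ℝ xt yt - |x₁ * y₁| : ℝ)..(inner ℝ xt yt + |x₁ * y₁| : ℝ),
          φ τ * |(x₁ * y₁ + inner ℝ xt yt) - τ| ^ (κ - 1) *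
            |(-(x₁ * y₁) + inner ℝ xt yt) - τ| ^ κ := by
  rw [integral_comp_mul_add_mul_one_add_mul_one_sub_sq_rpow φ hxy]
  ring

theorem stmt_8 (d : ℕ) (hd : 1 ≤ d) (κ : ℝ) (hκ : 0 < κ)
    (x₁ y₁ : ℝ) (xt yt : EuclideanSpace ℝ (Fin d))
    (hx : x₁^2 + ‖xt‖^2 = 1) (hy : y₁^2 + ‖yt‖^2 = 1) (hxy : x₁ * y₁ ≠ 0)
    (φ : ℝ → ℝ)
    (hφ : IntervalIntegrable (fun t => |φ t| * (1 - t^2) ^ (κ - 1)) volume (-1) 1) :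
    ((Real.sqrt π)⁻¹ * Real.Gamma (κ + 1/2) / Real.Gamma κ) *
        ∫ t in (-1:ℝ)..1, φ (x₁ * y₁ * t + inner ℝ xt yt) * (1 + t) * (1 - t^2) ^ (κ - 1) =
      ((Real.sqrt π)⁻¹ * Real.Gamma (κ + 1/2) / Real.Gamma κ) / |x₁ * y₁| ^ (2 * κ) *
        ∫ τ in (inner ℝ xt yt - |x₁ * y₁| : ℝ)..(inner ℝ xt yt + |x₁ * y₁| : ℝ),
          φ τ * |(x₁ * y₁ + inner ℝ xt yt) - τ| ^ (κ - 1) *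
            |(-(x₁ * y₁) + inner ℝ xt yt) - τ| ^ κ :=
  stmt_8_general d κ x₁ y₁ xt yt hxy φ
end
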